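/- Let q = 2ᵗ with t ≥ 1, let 𝔽_q be a finite field of order q, let m ≥ 2, and let H be the point-by-line incidence matrix over 𝔽₂ of EG₁(m,q), with rows indexed by the nonzero vectors of 𝔽_q^m and columns indexed by the lines of EG₁(m,q). Then the rank of H·Hᵀ over 𝔽₂ equals (q^m − q)/(q − 1) = (2^{tm} − 2ᵗ)/(2ᵗ − 1). -/

import Mathlib

/-!
Two nonzero vectors `p ≠ p'` lie on a common line of `EG₁(m, q)` iff they are not
proportional, and then on exactly one, since the line through them misses `0` iff `p'` is
off the span of `p`. The lines through `p` partition the `q^m - q` vectors off that span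
into blocks of `q - 1`, so their number `(q^m - q)/(q - 1)` is even for even `q`. Hence over
`𝔽₂` the entry `(H Hᵀ)(p, p')` is `0` if `p` and `p'` define the same point of
`ℙ^{m-1}(𝔽_q)` and `1` otherwise: `H Hᵀ` is the matrix `J - I` on the `N = (q^m - 1)/(q - 1)`
projective points with rows and columns repeated, which does not change the rank. As `N` is
odd, the kernel of `J - I` over `𝔽₂` is spanned by the all-ones vector, so the rank is
`N - 1 = (q^m - q)/(q - 1)`.
-/

open scoped Classical

/-- The lines of the incidence structure `EG₁(m, q)`: cosets of the one-dimensional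
linear subspaces of `𝔽_q^m` that do not contain the zero vector. -/
def EGLine (F : Type) [Field F] (m : ℕ) : Type :=
  {ℓ : Set (Fin m → F) // (∃ (W : Submodule F (Fin m → F)) (a : Fin m → F),
    Module.finrank F W = 1 ∧ ℓ = (a + ·) '' (W : Set (Fin m → F))) ∧ (0 : Fin m → F) ∉ ℓ}

noncomputable instance (F : Type) [Field F] [Fintype F] (m : ℕ) :
    Fintype (EGLine F m) := by
  unfold EGLine; exact Fintype.ofFinite _

namespace Matrix

theorem rank_submatrix_of_surjective {R m n m₀ n₀ : Type*} [CommSemiring R]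
    [StrongRankCondition R] [Fintype n] [Fintype n₀] (A : Matrix m n R) {f : m₀ → m} {g : n₀ → n} (hf : f.Surjective) (hg : g.Surjective) :
    (A.submatrix f g).rank = A.rank := by
  refine le_antisymm (A.rank_submatrix_le f g) ?_
  calc A.rank = ((A.submatrix f g).submatrix (f.surjInv hf) (g.surjInv hg)).rank := by
        congr 1; ext i j; simp [Function.surjInv_eq]
    _ ≤ (A.submatrix f g).rank := rank_submatrix_le _ _ _

section OnesSubOne

variable {K ι : Type*} [Fintype ι]

theorem ones_sub_one_mulVec [Ring K] (v : ι → K) :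
    (of (fun _ _ => 1) - 1 : Matrix ι ι K) *ᵥ v = (∑ i, v i) • (fun _ => 1) - v := by
  rw [sub_mulVec, one_mulVec]
  ext i
  simp [mulVec, dotProduct]

theorem ker_ones_sub_one [CommRing K] (hι : (Fintype.card ι : K) = 1) :
    LinearMap.ker (of (fun _ _ => 1) - 1 : Matrix ι ι K).mulVecLin = K ∙ (fun _ => 1) := by
  ext v
  rw [LinearMap.mem_ker, mulVecLin_apply, ones_sub_one_mulVec, sub_eq_zero,
    Submodule.mem_span_singleton]
  constructor
  · exact fun h => ⟨_, h⟩
  · rintro ⟨c, rfl⟩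
    simp [hι]

theorem rank_ones_sub_one [Field K] (hι : (Fintype.card ι : K) = 1) :
    (of (fun _ _ => 1) - 1 : Matrix ι ι K).rank = Fintype.card ι - 1 := by
  have : Nonempty ι := Fintype.card_pos_iff.1 (Nat.pos_of_ne_zero fun h => by simp [h] at hι)
  have hones : (fun _ => 1 : ι → K) ≠ 0 :=
    Function.ne_iff.2 ⟨Classical.arbitrary ι, one_ne_zero⟩
  have := LinearMap.finrank_range_add_finrank_ker (of (fun _ _ => 1) - 1 : Matrix ι ι K).mulVecLin
  rw [ker_ones_sub_one hι, finrank_span_singleton hones,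
    Module.finrank_fintype_fun_eq_card] at this
  rw [rank]
  omega

end OnesSubOne

theorem mul_transpose_apply_eq_card {α β R : Type*} [Fintype β] [NonAssocSemiring R]
    (r : α → β → Prop) (H : Matrix α β R) (hH : ∀ a b, H a b = if r a b then 1 else 0)
    (a a' : α) : (H * H.transpose) a a' = Nat.card {b // r a b ∧ r a' b} := by
  simp only [mul_apply, transpose_apply, hH, ite_zero_mul_ite_zero, mul_one,
    Finset.sum_boole, Nat.card_eq_fintype_card, Fintype.card_subtype]

end Matrix

theorem Submodule.card_span_singleton {K V : Type*} [Field K] [AddCommGroup V] [Module K V]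
    {v : V} (hv : v ≠ 0) : Nat.card (K ∙ v) = Nat.card K :=
  Nat.card_congr (LinearEquiv.toSpanNonzeroSingleton K V v hv).toEquiv.symm

namespace EGLine

variable {F : Type} [Field F] {m : ℕ}

theorem exists_eq_image_add_span (ℓ : EGLine F m) {x : Fin m → F} (hx : x ∈ ℓ.1) :
    ∃ v : Fin m → F, v ≠ 0 ∧ ℓ.1 = (x + ·) '' (F ∙ v : Set (Fin m → F)) := by
  obtain ⟨⟨W, a, hW, hℓ⟩, -⟩ := ℓ.2
  have : Nontrivial W := Module.nontrivial_of_finrank_eq_succ hW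
  obtain ⟨⟨v, hvW⟩, hv⟩ := exists_ne (0 : W)
  have hv0 : v ≠ 0 := by simpa using hv
  refine ⟨v, hv0, ?_⟩
  rw [← eq_span_singleton_of_mem_of_finrank_eq_one hW hvW hv0, hℓ]
  rw [hℓ] at hx
  obtain ⟨w, hw, rfl⟩ := hx
  ext z
  simp only [Set.image_add_left, Set.mem_preimage, SetLike.mem_coe]
  rw [show -(a + w) + z = (-a + z) - w by abel, Submodule.sub_mem_iff_left _ hw]

theorem eq_image_add_span_sub (ℓ : EGLine F m) {x y : Fin m → F} (hx : x ∈ ℓ.1) (hy : y ∈ ℓ.1)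
    (hxy : x ≠ y) : ℓ.1 = (x + ·) '' (F ∙ (y - x) : Set (Fin m → F)) := by
  obtain ⟨v, -, hℓ⟩ := ℓ.exists_eq_image_add_span hx
  rw [hℓ] at hy ⊢
  obtain ⟨w, hw, rfl⟩ := hy
  obtain ⟨c, rfl⟩ := Submodule.mem_span_singleton.1 hw
  have hc : c ≠ 0 := by rintro rfl; simp at hxy
  rw [add_sub_cancel_left, Submodule.span_singleton_smul_eq (IsUnit.mk0 c hc)]

theorem notMem_span_of_mem (ℓ : EGLine F m) {x y : Fin m → F} (hx : x ∈ ℓ.1) (hy : y ∈ ℓ.1)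
    (hxy : x ≠ y) : y ∉ F ∙ x := by
  intro hyx
  obtain ⟨c, rfl⟩ := Submodule.mem_span_singleton.1 hyx
  have hc : c - 1 ≠ 0 := sub_ne_zero.2 (by rintro rfl; simp at hxy)
  apply ℓ.2.2
  rw [ℓ.eq_image_add_span_sub hx hy hxy, show c • x - x = (c - 1) • x by module,
    Submodule.span_singleton_smul_eq (IsUnit.mk0 _ hc)]
  exact ⟨-x, Submodule.neg_mem _ (Submodule.mem_span_singleton_self x), add_neg_cancel x⟩

theorem zero_notMem_image_add_span_sub {p x : Fin m → F} (hp : p ≠ 0) (hx : x ∉ F ∙ p) :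
    (0 : Fin m → F) ∉ (p + ·) '' (F ∙ (x - p) : Set (Fin m → F)) := by
  rintro ⟨_, hu, hu0⟩
  obtain ⟨c, rfl⟩ := Submodule.mem_span_singleton.1 hu
  have hcx : c • x = (c - 1) • p := by linear_combination (norm := module) hu0
  rcases eq_or_ne c 0 with rfl | hc
  · exact hp (by simpa using hu0)
  · refine hx (Submodule.mem_span_singleton.2 ⟨c⁻¹ * (c - 1), ?_⟩)
    rw [mul_smul, ← hcx, inv_smul_smul₀ hc]

theorem existsUnique_mem_and_mem {p x : Fin m → F} (hp : p ≠ 0) (hx : x ∉ F ∙ p) :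
    ∃! ℓ : EGLine F m, p ∈ ℓ.1 ∧ x ∈ ℓ.1 := by
  have hpx : p ≠ x := fun h => hx (h ▸ Submodule.mem_span_singleton_self p)
  refine ⟨⟨_, ⟨_, p, finrank_span_singleton (sub_ne_zero.2 hpx.symm), rfl⟩,
    zero_notMem_image_add_span_sub hp hx⟩, ⟨⟨0, zero_mem _, add_zero p⟩,
    ⟨x - p, Submodule.mem_span_singleton_self _, add_sub_cancel p x⟩⟩, ?_⟩
  rintro ℓ ⟨hpℓ, hxℓ⟩
  exact Subtype.ext (ℓ.eq_image_add_span_sub hpℓ hxℓ hpx)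

theorem card_eq (ℓ : EGLine F m) : Nat.card ℓ.1 = Nat.card F := by
  obtain ⟨x, hx⟩ : ℓ.1.Nonempty := by
    obtain ⟨⟨W, a, -, hℓ⟩, -⟩ := ℓ.2
    exact hℓ ▸ ⟨a, 0, zero_mem W, add_zero a⟩
  obtain ⟨v, hv, hℓ⟩ := ℓ.exists_eq_image_add_span hx
  rw [hℓ, Nat.card_image_of_injective (add_right_injective x)]
  exact Submodule.card_span_singleton hv

theorem card_sdiff_singleton (ℓ : EGLine F m) {p : Fin m → F} (hp : p ∈ ℓ.1) :
    Nat.card ↥(ℓ.1 \ {p}) = Nat.card F - 1 := by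
  rw [Nat.card_coe_set_eq, Set.ncard_sdiff_singleton_of_mem hp, ← Nat.card_coe_set_eq, card_eq]

noncomputable def sigmaEquivNotMemSpan {p : Fin m → F} (hp : p ≠ 0) :
    (Σ ℓ : {ℓ : EGLine F m // p ∈ ℓ.1}, ↥(ℓ.1.1 \ {p})) ≃ {x // x ∉ F ∙ p} :=
  Equiv.ofBijective (fun x => ⟨x.2, x.1.1.notMem_span_of_mem x.1.2 x.2.2.1 (Ne.symm x.2.2.2)⟩) <| by
    constructor
    · rintro ⟨⟨ℓ, hℓ⟩, x, hx⟩ ⟨⟨ℓ', hℓ'⟩, x', hx'⟩ h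
      simp only [Subtype.mk.injEq] at h
      subst h
      have hxp := ℓ.notMem_span_of_mem hℓ hx.1 (Ne.symm hx.2)
      obtain rfl := (existsUnique_mem_and_mem hp hxp).unique ⟨hℓ, hx.1⟩ ⟨hℓ', hx'.1⟩
      rfl
    · rintro ⟨x, hx⟩
      obtain ⟨ℓ, ⟨hpℓ, hxℓ⟩, -⟩ := existsUnique_mem_and_mem hp hx
      exact ⟨⟨⟨ℓ, hpℓ⟩, x, hxℓ, fun h => hx (by rw [h]; exact Submodule.mem_span_singleton_self p)⟩,
        rfl⟩

variable [Fintype F]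

theorem card_mem_mul_card_sub_one {p : Fin m → F} (hp : p ≠ 0) :
    Nat.card {ℓ : EGLine F m // p ∈ ℓ.1} * (Nat.card F - 1) = Nat.card F ^ m - Nat.card F := by
  calc Nat.card {ℓ : EGLine F m // p ∈ ℓ.1} * (Nat.card F - 1)
      = ∑ ℓ : {ℓ : EGLine F m // p ∈ ℓ.1}, Nat.card ↥(ℓ.1.1 \ {p}) := by
        rw [Finset.sum_congr rfl fun ℓ _ => card_sdiff_singleton ℓ.1 ℓ.2, Finset.sum_const,
          Finset.card_univ, smul_eq_mul, Nat.card_eq_fintype_card]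
    _ = Nat.card {x // x ∉ F ∙ p} := by
        rw [← Nat.card_sigma, Nat.card_congr (sigmaEquivNotMemSpan hp)]
    _ = Nat.card F ^ m - Nat.card F := by
        rw [Nat.card_eq_fintype_card, Fintype.card_subtype_compl, ← Nat.card_eq_fintype_card,
          ← Nat.card_eq_fintype_card, Nat.card_fun, Nat.card_fin,
          Submodule.card_span_singleton hp]

theorem even_card_mem (hq : Even (Nat.card F)) (hm : m ≠ 0) {p : Fin m → F} (hp : p ≠ 0) :
    Even (Nat.card {ℓ : EGLine F m // p ∈ ℓ.1}) := by
  have hsub : Even (Nat.card F ^ m - Nat.card F) :=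
    (Nat.even_sub (Nat.le_self_pow hm _)).2 (iff_of_true ((Nat.even_pow' hm).2 hq) hq)
  have hodd : Odd (Nat.card F - 1) := Nat.Even.sub_odd Nat.card_pos hq odd_one
  rw [← card_mem_mul_card_sub_one hp, Nat.even_mul] at hsub
  exact hsub.resolve_right (Nat.not_even_iff_odd.2 hodd)

open Projectivization LinearAlgebra.Projectivization in
theorem incidence_mul_transpose_eq_submatrix (hq : Even (Nat.card F)) (hm : m ≠ 0)
    (H : Matrix {p : Fin m → F // p ≠ 0} (EGLine F m) (ZMod 2))
    (hH : ∀ p ℓ, H p ℓ = if p.1 ∈ ℓ.1 then 1 else 0) :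
    H * H.transpose = (Matrix.of (fun _ _ => 1) - 1 : Matrix (ℙ F (Fin m → F)) _ (ZMod 2)).submatrix
      (fun p => mk F p.1 p.2) (fun p => mk F p.1 p.2) := by
  ext p p'
  rw [Matrix.mul_transpose_apply_eq_card (fun p ℓ => p.1 ∈ ℓ.1) H hH]
  simp only [Matrix.submatrix_apply, Matrix.sub_apply, Matrix.of_apply, Matrix.one_apply,
    mk_eq_mk_iff', ← Submodule.mem_span_singleton]
  by_cases hpp : p = p'
  · subst hpp
    simp only [and_self, Submodule.mem_span_singleton_self, if_true, sub_self]
    exact ZMod.natCast_eq_zero_iff_even.2 (even_card_mem hq hm p.2)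
  by_cases hmem : p.1 ∈ F ∙ p'.1
  · have : IsEmpty {ℓ : EGLine F m // p.1 ∈ ℓ.1 ∧ p'.1 ∈ ℓ.1} :=
      ⟨fun ℓ => ℓ.1.notMem_span_of_mem ℓ.2.2 ℓ.2.1 (fun h => hpp (Subtype.ext h).symm) hmem⟩
    simp [hmem]
  · obtain ⟨ℓ, hℓ, huniq⟩ := existsUnique_mem_and_mem p'.2 hmem
    have : Nat.card {ℓ : EGLine F m // p.1 ∈ ℓ.1 ∧ p'.1 ∈ ℓ.1} = 1 :=
      Nat.card_eq_one_iff_exists.2 ⟨⟨ℓ, hℓ.symm⟩, fun ℓ' => Subtype.ext (huniq _ ℓ'.2.symm)⟩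
    rw [this, if_neg hmem, Nat.cast_one, sub_zero]

end EGLine

namespace Projectivization

open LinearAlgebra.Projectivization

variable {F : Type} [Field F] {m : ℕ}

theorem pow_sub_one_eq_card_mul :
    Nat.card F ^ m - 1 = Nat.card (ℙ F (Fin m → F)) * (Nat.card F - 1) := by
  simpa [Nat.card_fun] using card F (Fin m → F)

variable [Finite F]

theorem odd_card_of_even (hq : Even (Nat.card F)) (hm : m ≠ 0) :
    Odd (Nat.card (ℙ F (Fin m → F))) := by
  have hodd : Odd (Nat.card F ^ m - 1) :=
    Nat.Even.sub_odd (Nat.one_le_pow _ _ Nat.card_pos) ((Nat.even_pow' hm).2 hq) odd_one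
  rw [pow_sub_one_eq_card_mul] at hodd
  exact (Nat.odd_mul.1 hodd).1

theorem card_sub_one_eq_div (hm : m ≠ 0) :
    Nat.card (ℙ F (Fin m → F)) - 1 = (Nat.card F ^ m - Nat.card F) / (Nat.card F - 1) := by
  have hq : 1 < Nat.card F := Finite.one_lt_card
  have hqm : Nat.card F ≤ Nat.card F ^ m := Nat.le_self_pow hm _
  have : Nat.card F ^ m - Nat.card F = (Nat.card (ℙ F (Fin m → F)) - 1) * (Nat.card F - 1) := by
    rw [Nat.sub_one_mul, ← pow_sub_one_eq_card_mul]
    omega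
  rw [this, Nat.mul_div_cancel _ (by omega)]

end Projectivization

open Projectivization LinearAlgebra.Projectivization in
/-- for `q = 2ᵗ` and `m ≥ 2`, the point-by-line incidence matrix `H` over
`𝔽₂` of `EG₁(m, q)` (rows: nonzero vectors of `𝔽_q^m`) satisfies
`rank(H · Hᵀ) = (q^m - q)/(q - 1) = (2^{tm} - 2ᵗ)/(2ᵗ - 1)` over `𝔽₂`. -/
theorem stmt_12 (t m : ℕ) (ht : 1 ≤ t) (hm : 2 ≤ m)
    (F : Type) [Field F] [Fintype F] (hF : Fintype.card F = 2 ^ t)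
    (H : Matrix {p : Fin m → F // p ≠ 0} (EGLine F m) (ZMod 2))
    (hH : ∀ p ℓ, H p ℓ = if p.1 ∈ ℓ.1 then 1 else 0) :
    (H * H.transpose).rank = (2 ^ (t * m) - 2 ^ t) / (2 ^ t - 1) := by
  have hcard : Nat.card F = 2 ^ t := Nat.card_eq_fintype_card.trans hF
  have hq : Even (Nat.card F) := hcard ▸ (Nat.even_pow' (by omega)).2 even_two
  have hmk : Function.Surjective fun p : {p : Fin m → F // p ≠ 0} => mk F p.1 p.2 :=
    fun x => ⟨⟨x.rep, x.rep_nonzero⟩, mk_rep x⟩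
  have := Fintype.ofFinite (ℙ F (Fin m → F))
  rw [EGLine.incidence_mul_transpose_eq_submatrix hq (by omega) H hH,
    Matrix.rank_submatrix_of_surjective _ hmk hmk, Matrix.rank_ones_sub_one,
    ← Nat.card_eq_fintype_card, card_sub_one_eq_div (by omega), hcard, pow_mul]
  rw [← Nat.card_eq_fintype_card]
  exact ZMod.natCast_eq_one_iff_odd.2 (odd_card_of_even hq (by omega))
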